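/- Let q ≥ 2 and j ≥ 1. With b_{j,m,n} defined by b_{j,m,1} = [1^m 0^j]_q and b_{j,m,n+1} = b_{j,m,n} - (q^{j+m-n} - 1) wherever valid, one has for all m ≥ q^j: b_{j+1,m,q^j+1} = [1^{m+1-q^j} 0^j]_q = b_{j,m+1-q^j,1}. That is, after q^j subtraction steps the table for parameter j+1 reproduces the table for parameter j shifted by q^j - 1 rows. -/

import Mathlib

/-- `[1^m 0^j]_q = ∑_{i<m} q^{j+i}`. -/
def onesZeros (q j m : ℕ) : ℕ := ∑ i ∈ Finset.range m, q ^ (j + i)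

/-- `bSeq q j m t` is `b_{j,m,t+1}`, defined by `b_{j,m,1} = [1^m 0^j]_q`
and `b_{j,m,n+1} = b_{j,m,n} - (q^{j+m-n} - 1)`. -/
def bSeq (q j m : ℕ) : ℕ → ℕ
  | 0 => onesZeros q j m
  | t + 1 => bSeq q j m t - (q ^ (j + m - t - 1) - 1)

/-!
Each step removes the top digit `q^{j+m-t-1}` of `[1^{m-t} 0^j]_q` and adds back `1`, so
`b_{j,m,t+1} = [1^{m-t} 0^j]_q + t`. For `t = q^j` and parameter `j + 1`, the accumulated
`q^j` is exactly the lowest digit that turns `[1^{m-q^j} 0^{j+1}]_q` into `[1^{m+1-q^j} 0^j]_q`.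
-/

theorem onesZeros_succ (q j n : ℕ) : onesZeros q j (n + 1) = onesZeros q j n + q ^ (j + n) :=
  Finset.sum_range_succ _ n

theorem onesZeros_succ' (q j n : ℕ) : onesZeros q j (n + 1) = onesZeros q (j + 1) n + q ^ j := by
  simp only [onesZeros, Finset.sum_range_succ', add_zero]
  ring_nf

theorem bSeq_eq_onesZeros_add {q : ℕ} (hq : 0 < q) (j m : ℕ) {t : ℕ} (ht : t ≤ m) :
    bSeq q j m t = onesZeros q j (m - t) + t := by
  induction t with
  | zero => rfl
  | succ t ih =>
    have hdigit : onesZeros q j (m - t) = onesZeros q j (m - (t + 1)) + q ^ (j + m - t - 1) := by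
      rw [show m - t = m - (t + 1) + 1 by omega, onesZeros_succ,
        show j + (m - (t + 1)) = j + m - t - 1 by omega]
    have hpos : 1 ≤ q ^ (j + m - t - 1) := Nat.one_le_pow _ _ hq
    rw [bSeq, ih (by omega), hdigit]
    omega

theorem stmt8_general (q j : ℕ) (hq : 2 ≤ q) (m : ℕ) (hm : q ^ j ≤ m) :
    bSeq q (j + 1) m (q ^ j) = onesZeros q j (m + 1 - q ^ j) ∧
      bSeq q (j + 1) m (q ^ j) = bSeq q j (m + 1 - q ^ j) 0 := by
  have hshift : bSeq q (j + 1) m (q ^ j) = onesZeros q j (m + 1 - q ^ j) := by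
    rw [bSeq_eq_onesZeros_add (by omega) _ _ hm, show m + 1 - q ^ j = m - q ^ j + 1 by omega,
      onesZeros_succ']
  exact ⟨hshift, hshift⟩

/-- for `q ≥ 2`, `j ≥ 1` and `m ≥ q^j`:
`b_{j+1,m,q^j+1} = [1^{m+1-q^j} 0^j]_q = b_{j,m+1-q^j,1}`. -/
theorem stmt8 (q j : ℕ) (hq : 2 ≤ q) (hj : 1 ≤ j) (m : ℕ) (hm : q ^ j ≤ m) :
    bSeq q (j + 1) m (q ^ j) = onesZeros q j (m + 1 - q ^ j) ∧
      bSeq q (j + 1) m (q ^ j) = bSeq q j (m + 1 - q ^ j) 0 :=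
  stmt8_general q j hq m hm
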